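/- PAPAL is bisimulation invariant: for all pointed epistemic models M_s and M'_{s'}, if M_s ≃ M'_{s'} (they are bisimilar), then for every φ ∈ L_PAPAL, M_s ⊨ φ if and only if M'_{s'} ⊨ φ. -/
import Mathlib


/-- An epistemic (S5) model: a nonempty set of states, an equivalence
relation for each agent, and a valuation of atoms. -/
structure EpiModel (A P : Type) where
  S : Type
  ne : Nonempty S
  rel : A → S → S → Prop
  equiv : ∀ a, Equivalence (rel a)
  val : P → Set S

/-- Positive formulas L_EL⁺ : p | ¬p | ∧ | ∨ | K_a. -/
inductive PosForm (A P : Type) where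
  | atom : P → PosForm A P
  | natom : P → PosForm A P
  | and : PosForm A P → PosForm A P → PosForm A P
  | or : PosForm A P → PosForm A P → PosForm A P
  | know : A → PosForm A P → PosForm A P

/-- Satisfaction of a positive formula, relativized to a current domain `D`
(representing the submodel of `M` induced by `D`). -/
def PosForm.sat {A P : Type} (M : EpiModel A P) : PosForm A P → Set M.S → M.S → Prop
  | .atom p, _, s => s ∈ M.val p
  | .natom p, _, s => s ∉ M.val p
  | .and φ ψ, D, s => PosForm.sat M φ D s ∧ PosForm.sat M ψ D s
  | .or φ ψ, D, s => PosForm.sat M φ D s ∨ PosForm.sat M ψ D s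
  | .know a φ, D, s => ∀ t, M.rel a s t → t ∈ D → PosForm.sat M φ D t

/-- The language L_PAPAL : atoms, ¬, ∧, K_a, announcements [ψ]φ and the
positive arbitrary-announcement quantifier □⁺. -/
inductive Form (A P : Type) where
  | atom : P → Form A P
  | neg : Form A P → Form A P
  | and : Form A P → Form A P → Form A P
  | know : A → Form A P → Form A P
  | ann : Form A P → Form A P → Form A P
  | pbox : Form A P → Form A P

/-- Satisfaction, relativized to a current domain `D`: `Form.sat M φ D s`
means that φ holds at state `s` of the restriction of `M` to `D`.
Announcement `[ψ]φ` further restricts the domain to the states of `D`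
satisfying ψ; `□⁺φ` quantifies over announcements of positive formulas. -/
def Form.sat {A P : Type} (M : EpiModel A P) : Form A P → Set M.S → M.S → Prop
  | .atom p, _, s => s ∈ M.val p
  | .neg φ, D, s => ¬ Form.sat M φ D s
  | .and φ ψ, D, s => Form.sat M φ D s ∧ Form.sat M ψ D s
  | .know a φ, D, s => ∀ t, M.rel a s t → t ∈ D → Form.sat M φ D t
  | .ann ψ φ, D, s => Form.sat M ψ D s → Form.sat M φ {t | t ∈ D ∧ Form.sat M ψ D t} s
  | .pbox φ, D, s => ∀ χ : PosForm A P, PosForm.sat M χ D s →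
      Form.sat M φ {t | t ∈ D ∧ PosForm.sat M χ D t} s

/-- Truth at a pointed model `M_s`. -/
def Sat {A P : Type} (M : EpiModel A P) (s : M.S) (φ : Form A P) : Prop :=
  Form.sat M φ Set.univ s

def Form.or {A P : Type} (φ ψ : Form A P) : Form A P := .neg (.and (.neg φ) (.neg ψ))
def Form.imp {A P : Type} (φ ψ : Form A P) : Form A P := Form.or (.neg φ) ψ
def Form.iff {A P : Type} (φ ψ : Form A P) : Form A P := .and (Form.imp φ ψ) (Form.imp ψ φ)
def Form.pdia {A P : Type} (φ : Form A P) : Form A P := .neg (.pbox (.neg φ))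
def Form.lknow {A P : Type} (a : A) (φ : Form A P) : Form A P := .neg (.know a (.neg φ))

/-- Validity on the class S5 of all epistemic models. -/
def Valid (A P : Type) (φ : Form A P) : Prop :=
  ∀ (M : EpiModel A P) (s : M.S), Sat M s φ

/-- A bisimulation between epistemic models: a nonempty relation satisfying
**atoms**, **forth** and **back**. -/
def IsBisim {A P : Type} (M M' : EpiModel A P) (R : M.S → M'.S → Prop) : Prop :=
  (∃ s s', R s s') ∧
  ∀ s s', R s s' →
    (∀ p, s ∈ M.val p ↔ s' ∈ M'.val p) ∧
    (∀ a t, M.rel a s t → ∃ t', M'.rel a s' t' ∧ R t t') ∧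
    (∀ a t', M'.rel a s' t' → ∃ t, M.rel a s t ∧ R t t')

/-- Two pointed models are bisimilar. -/
def Bisimilar {A P : Type} (M M' : EpiModel A P) (s : M.S) (s' : M'.S) : Prop :=
  ∃ R, IsBisim M M' R ∧ R s s'

/-- Two domains correspond under `R`. -/
def DomMatch {A P : Type} (M M' : EpiModel A P) (R : M.S → M'.S → Prop)
    (D : Set M.S) (D' : Set M'.S) : Prop :=
  ∀ s s', R s s' → (s ∈ D ↔ s' ∈ D')

lemma pos_invariant {A P : Type} {M M' : EpiModel A P} {R : M.S → M'.S → Prop}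
    (hR : IsBisim M M' R) (χ : PosForm A P) :
    ∀ (D : Set M.S) (D' : Set M'.S) s s', DomMatch M M' R D D' → R s s' →
      (PosForm.sat M χ D s ↔ PosForm.sat M' χ D' s') := by
  induction χ with
  | atom p => intro D D' s s' hM hs; exact (hR.2 s s' hs).1 p
  | natom p => intro D D' s s' hM hs; exact not_congr ((hR.2 s s' hs).1 p)
  | and φ ψ ihφ ihψ =>
    intro D D' s s' hM hs
    exact and_congr (ihφ D D' s s' hM hs) (ihψ D D' s s' hM hs)
  | or φ ψ ihφ ihψ =>
    intro D D' s s' hM hs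
    exact or_congr (ihφ D D' s s' hM hs) (ihψ D D' s s' hM hs)
  | know a φ ih =>
    intro D D' s s' hM hs
    constructor
    · intro h t' ht' htD'
      obtain ⟨t, htr, htR⟩ := (hR.2 s s' hs).2.2 a t' ht'
      exact (ih D D' t t' hM htR).1 (h t htr ((hM t t' htR).2 htD'))
    · intro h t htr htD
      obtain ⟨t', ht', htR⟩ := (hR.2 s s' hs).2.1 a t htr
      exact (ih D D' t t' hM htR).2 (h t' ht' ((hM t t' htR).1 htD))

lemma form_invariant {A P : Type} {M M' : EpiModel A P} {R : M.S → M'.S → Prop}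
    (hR : IsBisim M M' R) (φ : Form A P) :
    ∀ (D : Set M.S) (D' : Set M'.S) s s', DomMatch M M' R D D' → R s s' →
      (Form.sat M φ D s ↔ Form.sat M' φ D' s') := by
  induction φ with
  | atom p => intro D D' s s' hM hs; exact (hR.2 s s' hs).1 p
  | neg φ ih => intro D D' s s' hM hs; exact not_congr (ih D D' s s' hM hs)
  | and φ ψ ihφ ihψ =>
    intro D D' s s' hM hs
    exact and_congr (ihφ D D' s s' hM hs) (ihψ D D' s s' hM hs)
  | know a φ ih =>
    intro D D' s s' hM hs
    constructor
    · intro h t' ht' htD'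
      obtain ⟨t, htr, htR⟩ := (hR.2 s s' hs).2.2 a t' ht'
      exact (ih D D' t t' hM htR).1 (h t htr ((hM t t' htR).2 htD'))
    · intro h t htr htD
      obtain ⟨t', ht', htR⟩ := (hR.2 s s' hs).2.1 a t htr
      exact (ih D D' t t' hM htR).2 (h t' ht' ((hM t t' htR).1 htD))
  | ann ψ φ ihψ ihφ =>
    intro D D' s s' hM hs
    have hM' : DomMatch M M' R {t | t ∈ D ∧ Form.sat M ψ D t}
        {t | t ∈ D' ∧ Form.sat M' ψ D' t} := by
      intro t t' ht
      exact and_congr (hM t t' ht) (ihψ D D' t t' hM ht)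
    exact imp_congr (ihψ D D' s s' hM hs) (ihφ _ _ s s' hM' hs)
  | pbox φ ih =>
    intro D D' s s' hM hs
    have key : ∀ χ : PosForm A P, DomMatch M M' R
        {t | t ∈ D ∧ PosForm.sat M χ D t} {t | t ∈ D' ∧ PosForm.sat M' χ D' t} := by
      intro χ t t' ht
      exact and_congr (hM t t' ht) (pos_invariant hR χ D D' t t' hM ht)
    constructor
    · intro h χ hχ
      exact (ih _ _ s s' (key χ) hs).1 (h χ ((pos_invariant hR χ D D' s s' hM hs).2 hχ))
    · intro h χ hχ
      exact (ih _ _ s s' (key χ) hs).2 (h χ ((pos_invariant hR χ D D' s s' hM hs).1 hχ))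

/-- PAPAL is bisimulation invariant: bisimilar pointed
models satisfy the same L_PAPAL formulas. -/
theorem papal_bisimulation_invariant
    (A P : Type) (M M' : EpiModel A P) (s : M.S) (s' : M'.S)
    (h : Bisimilar M M' s s') (φ : Form A P) :
    Sat M s φ ↔ Sat M' s' φ := by
  obtain ⟨R, hR, hs⟩ := h
  exact form_invariant hR φ Set.univ Set.univ s s' (fun _ _ _ => by simp) hs
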